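/- Fix a squarefree integer n > 0, let K = ℚ(√−n) ⊆ ℂ, let O be the ring of integers of K, set u = √−n, and let 𝒲 be the subgroup of SL(2,O) generated by the Cohn matrices W(α), α ∈ O. For γ = [[a, b], [c, d]] ∈ 𝒲 put κ(γ) = c·u·conj(d) − d·u·conj(c), κ'(γ) = a·u·conj(b) − b·u·conj(a), and ξ(γ) = a·u·conj(d) − b·u·conj(c). Then for all γ, γ' ∈ 𝒲, the complex number B := −κ(γ)·κ'(γ') − κ'(γ)·κ(γ') + ξ(γ)·conj(ξ(γ')) + ξ(γ')·conj(ξ(γ)) is a rational integer with B ≡ 2n (mod n²), and if moreover n > 3 then |B| ≥ 2n. -/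

import Mathlib

open Matrix Complex

/-- The ring of integers of `K = ℚ(√−n) ⊆ ℂ`: the elements of the subfield of `ℂ`
generated by `√−n = i√n` that are integral over `ℤ`. -/
noncomputable def quadIntRing (n : ℕ) : Subring ℂ :=
  (Subfield.closure {Complex.I * (Real.sqrt n : ℂ)}).toSubring ⊓
    (integralClosure ℤ ℂ).toSubring

/-- The Cohn matrix `W(α) = [[α, 1], [−1, 0]]` as an element of `SL(2,ℂ)`. -/
def CohnMatrix (a : ℂ) : Matrix.SpecialLinearGroup (Fin 2) ℂ :=
  ⟨!![a, 1; -1, 0], by simp [Matrix.det_fin_two_of]⟩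

/-- `𝒲`: the subgroup generated by the Cohn matrices `W(α)`, `α ∈ O`. -/
noncomputable def CohnSubgroup (n : ℕ) : Subgroup (Matrix.SpecialLinearGroup (Fin 2) ℂ) :=
  Subgroup.closure {γ | ∃ α ∈ quadIntRing n, γ = CohnMatrix α}

/-- The normalized bend `κ(γ) = c·u·conj(d) − d·u·conj(c)`. -/
noncomputable def kappa (n : ℕ) (γ : Matrix.SpecialLinearGroup (Fin 2) ℂ) : ℂ :=
  γ.1 1 0 * (Complex.I * (Real.sqrt n : ℂ)) * (starRingEnd ℂ) (γ.1 1 1) -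
    γ.1 1 1 * (Complex.I * (Real.sqrt n : ℂ)) * (starRingEnd ℂ) (γ.1 1 0)

/-- The normalized co-bend `κ'(γ) = a·u·conj(b) − b·u·conj(a)`. -/
noncomputable def kappa' (n : ℕ) (γ : Matrix.SpecialLinearGroup (Fin 2) ℂ) : ℂ :=
  γ.1 0 0 * (Complex.I * (Real.sqrt n : ℂ)) * (starRingEnd ℂ) (γ.1 0 1) -
    γ.1 0 1 * (Complex.I * (Real.sqrt n : ℂ)) * (starRingEnd ℂ) (γ.1 0 0)

/-- The normalized bend-center `ξ(γ) = a·u·conj(d) − b·u·conj(c)`. -/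
noncomputable def xi (n : ℕ) (γ : Matrix.SpecialLinearGroup (Fin 2) ℂ) : ℂ :=
  γ.1 0 0 * (Complex.I * (Real.sqrt n : ℂ)) * (starRingEnd ℂ) (γ.1 1 1) -
    γ.1 0 1 * (Complex.I * (Real.sqrt n : ℂ)) * (starRingEnd ℂ) (γ.1 1 0)

/-!
The pairing `B(γ, γ')` depends only on `γ⁻¹γ'`: expanding the entries gives
`B(gγ, gγ') = |det g|² B(γ, γ')`. For `δ = [[a, b], [c, d]] ∈ SL(2,ℂ)` one computes
`B(1, δ) = n (2 + 4 (Im a Im d − Im b Im c))`, using `Re(ad − bc) = 1`. Every element of `O` is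
`(x + y√−n)/2` with `x, y ∈ ℤ`, so for `δ = γ⁻¹γ' ∈ 𝒲 ⊆ SL(2,O)` the bracket is `2 + n m` with
`m ∈ ℤ`, whence `B = 2n + n² m`; and `|2n + n² m| ≥ 2n` once `n ≥ 4`.
-/

open ComplexConjugate

local notation "√-" n:max => Complex.I * ((Real.sqrt n : ℝ) : ℂ)

lemma sqrtNeg_sq (n : ℕ) : (√-n) ^ 2 = -(n : ℂ) := by
  rw [mul_pow, I_sq, ← ofReal_pow, Real.sq_sqrt n.cast_nonneg]
  push_cast; ring

lemma conj_sqrtNeg (n : ℕ) : conj (√-n) = -√-n := by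
  simp

lemma exists_rat_of_mem_closure_sqrtNeg {n : ℕ} {z : ℂ} (hz : z ∈ Subfield.closure {√-n}) :
    ∃ p q : ℚ, z = p + q * √-n := by
  have halg : IsAlgebraic ℚ (√-n) := IsIntegral.isAlgebraic <|
    IsIntegral.of_pow two_pos
      (by rw [sqrtNeg_sq]; exact_mod_cast isIntegral_algebraMap (x := (-n : ℚ)))
  have hle : Subfield.closure {√-n} ≤ (IntermediateField.adjoin ℚ {√-n}).toSubfield :=
    Subfield.closure_le.mpr
      (Set.singleton_subset_iff.mpr (IntermediateField.mem_adjoin_simple_self ℚ _))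
  have hz' : z ∈ Algebra.adjoin ℚ {√-n} := by
    rw [← IntermediateField.adjoin_simple_toSubalgebra_of_isAlgebraic halg]
    exact hle hz
  clear hz hle
  induction hz' using Algebra.adjoin_induction with
  | mem x hx => exact ⟨0, 1, by simp [Set.mem_singleton_iff.mp hx]⟩
  | algebraMap r => exact ⟨r, 0, by simp⟩
  | add x y _ _ hx hy =>
    obtain ⟨p, q, rfl⟩ := hx
    obtain ⟨p', q', rfl⟩ := hy
    exact ⟨p + p', q + q', by push_cast; ring⟩
  | mul x y _ _ hx hy =>
    obtain ⟨p, q, rfl⟩ := hx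
    obtain ⟨p', q', rfl⟩ := hy
    exact ⟨p * p' - n * q * q', p * q' + q * p', by
      push_cast; linear_combination (q * q' : ℂ) * sqrtNeg_sq n⟩

lemma exists_int_eq_of_isIntegral_ratCast {r : ℚ} (hr : IsIntegral ℤ (r : ℂ)) :
    ∃ m : ℤ, r = m := by
  rw [← eq_ratCast (algebraMap ℚ ℂ), isIntegral_algebraMap_iff (algebraMap ℚ ℂ).injective] at hr
  obtain ⟨m, hm⟩ := IsIntegrallyClosed.isIntegral_iff.mp hr
  exact ⟨m, by simp [← hm]⟩

lemma exists_int_eq_of_squarefree_mul_sq {n : ℕ} (hn : Squarefree n) {r : ℚ} {N : ℤ}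
    (h : n * r ^ 2 = N) : ∃ t : ℤ, r = t := by
  obtain ⟨s, hs⟩ := IsIntegrallyClosed.exists_algebraMap_eq_of_isIntegral_pow (R := ℤ)
    (x := n * r) two_pos (by
      rw [show (n * r) ^ 2 = ((n * N : ℤ) : ℚ) by push_cast; rw [← h]; ring]
      exact isIntegral_algebraMap)
  rw [eq_intCast] at hs
  have hs2 : s ^ 2 = n * N := by
    exact_mod_cast (show (s : ℚ) ^ 2 = n * N by rw [hs, ← h]; ring)
  obtain ⟨t, rfl⟩ : (n : ℤ) ∣ s :=
    ((Int.squarefree_natCast.mpr hn).dvd_pow_iff_dvd two_ne_zero).mp ⟨N, hs2⟩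
  refine ⟨t, mul_left_cancel₀ (Nat.cast_ne_zero.mpr hn.ne_zero : (n : ℚ) ≠ 0) ?_⟩
  rw [← hs]; push_cast; ring

lemma exists_int_two_mul_eq_of_mem_quadIntRing {n : ℕ} (hn : Squarefree n) {z : ℂ}
    (hz : z ∈ quadIntRing n) : ∃ x y : ℤ, 2 * z = x + y * √-n := by
  obtain ⟨hzK, hzO⟩ := Subring.mem_inf.mp hz
  obtain ⟨p, q, rfl⟩ := exists_rat_of_mem_closure_sqrtNeg hzK
  have hint : IsIntegral ℤ (p + q * √-n : ℂ) := hzO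
  have hint' : IsIntegral ℤ (p - q * √-n : ℂ) := by
    have := hint.map (starRingEnd ℂ).toIntAlgHom
    rw [RingHom.toIntAlgHom_apply, map_add, map_mul, map_ratCast, map_ratCast,
      conj_sqrtNeg] at this
    convert this using 1; ring
  have htrace : ((2 * p : ℚ) : ℂ) = (p + q * √-n) + (p - q * √-n) := by push_cast; ring
  have hnorm : ((p ^ 2 + n * q ^ 2 : ℚ) : ℂ) = (p + q * √-n) * (p - q * √-n) := by
    push_cast; linear_combination (q ^ 2 : ℂ) * sqrtNeg_sq n
  obtain ⟨x, hx⟩ := exists_int_eq_of_isIntegral_ratCast (htrace ▸ hint.add hint')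
  obtain ⟨k, hk⟩ := exists_int_eq_of_isIntegral_ratCast (hnorm ▸ hint.mul hint')
  obtain ⟨y, hy⟩ := exists_int_eq_of_squarefree_mul_sq hn (r := 2 * q) (N := 4 * k - x ^ 2)
    (by push_cast; rw [← hx, ← hk]; ring)
  have hx' : (x : ℂ) = 2 * p := by exact_mod_cast hx.symm
  have hy' : (y : ℂ) = 2 * q := by exact_mod_cast hy.symm
  exact ⟨x, y, by rw [hx', hy']; ring⟩

lemma mul_conj_add_conj_mul (z w : ℂ) :
    z * conj w + conj z * w = z * w + conj (z * w) + 4 * (z.im * w.im : ℝ) := by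
  apply Complex.ext <;> simp <;> ring

noncomputable def cohnPairing (n : ℕ) (γ γ' : SpecialLinearGroup (Fin 2) ℂ) : ℂ :=
  -(kappa n γ * kappa' n γ') - kappa' n γ * kappa n γ' +
    xi n γ * conj (xi n γ') + xi n γ' * conj (xi n γ)

lemma cohnPairing_mul_left (n : ℕ) (g γ γ' : SpecialLinearGroup (Fin 2) ℂ) :
    cohnPairing n (g * γ) (g * γ') = cohnPairing n γ γ' := by
  have hdet : g 0 0 * g 1 1 - g 0 1 * g 1 0 = 1 := by
    rw [← det_fin_two]; exact g.det_coe
  have hmul : ∀ A B : SpecialLinearGroup (Fin 2) ℂ, (A * B).1 = A.1 * B.1 := fun _ _ => rfl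
  have key : cohnPairing n (g * γ) (g * γ') = (g 0 0 * g 1 1 - g 0 1 * g 1 0) *
      conj (g 0 0 * g 1 1 - g 0 1 * g 1 0) * cohnPairing n γ γ' := by
    simp only [cohnPairing, kappa, kappa', xi, hmul, mul_apply, Fin.sum_univ_two, map_add,
      map_sub, map_mul, conj_I, conj_ofReal, conj_conj]
    ring
  rw [key, hdet, map_one, one_mul, one_mul]

lemma cohnPairing_one_left (n : ℕ) (δ : SpecialLinearGroup (Fin 2) ℂ) :
    cohnPairing n 1 δ =
      (n * (2 + 4 * ((δ 0 0).im * (δ 1 1).im - (δ 0 1).im * (δ 1 0).im)) : ℝ) := by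
  have hdet : δ 0 0 * δ 1 1 - δ 0 1 * δ 1 0 = 1 := by
    rw [← det_fin_two]; exact δ.det_coe
  have hdet' := congrArg conj hdet
  have had := mul_conj_add_conj_mul (δ 0 0) (δ 1 1)
  have hbc := mul_conj_add_conj_mul (δ 0 1) (δ 1 0)
  simp only [cohnPairing, kappa, kappa', xi, Matrix.SpecialLinearGroup.coe_one, one_apply_eq,
    one_apply_ne one_ne_zero, one_apply_ne zero_ne_one, map_one, map_zero, map_sub, map_mul,
    conj_I, conj_ofReal, conj_conj, ofReal_sub, ofReal_mul, ofReal_add, ofReal_natCast,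
    ofReal_ofNat] at hdet' had hbc ⊢
  linear_combination (n : ℂ) * (had - hbc + hdet + hdet') -
    (δ 0 0 * conj (δ 1 1) + conj (δ 0 0) * δ 1 1 - δ 0 1 * conj (δ 1 0) - conj (δ 0 1) * δ 1 0) *
      sqrtNeg_sq n

lemma cohnSubgroup_le_range_map (n : ℕ) :
    CohnSubgroup n ≤ (SpecialLinearGroup.map (quadIntRing n).subtype).range := by
  refine (Subgroup.closure_le _).mpr ?_
  rintro _ ⟨α, hα, rfl⟩
  refine ⟨⟨!![⟨α, hα⟩, 1; -1, 0], by simp [det_fin_two_of]⟩, ?_⟩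
  ext i j
  fin_cases i <;> fin_cases j <;> rfl

lemma mem_quadIntRing_of_mem_cohnSubgroup {n : ℕ} {γ : SpecialLinearGroup (Fin 2) ℂ}
    (hγ : γ ∈ CohnSubgroup n) (i j : Fin 2) : γ i j ∈ quadIntRing n := by
  obtain ⟨δ, rfl⟩ := cohnSubgroup_le_range_map n hγ
  exact (δ i j).2

lemma exists_int_two_mul_im_eq_of_mem_cohnSubgroup {n : ℕ} (hn : Squarefree n)
    {γ : SpecialLinearGroup (Fin 2) ℂ} (hγ : γ ∈ CohnSubgroup n) (i j : Fin 2) :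
    ∃ y : ℤ, 2 * (γ i j).im = y * √(n : ℝ) := by
  obtain ⟨_, y, h⟩ :=
    exists_int_two_mul_eq_of_mem_quadIntRing hn (mem_quadIntRing_of_mem_cohnSubgroup hγ i j)
  exact ⟨y, by simpa using congrArg im h⟩

lemma two_mul_le_abs_two_mul_add_sq_mul {n : ℤ} (hn : 3 < n) (m : ℤ) :
    2 * n ≤ |2 * n + n ^ 2 * m| := by
  rcases le_or_gt 0 m with hm | hm
  · rw [abs_of_nonneg (by positivity)]
    nlinarith
  · rw [abs_of_nonpos (by nlinarith)]
    nlinarith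

theorem cohnSubgroup_pairing_general (n : ℕ) (hsf : Squarefree n)
    (γ γ' : Matrix.SpecialLinearGroup (Fin 2) ℂ)
    (hγ : γ ∈ CohnSubgroup n) (hγ' : γ' ∈ CohnSubgroup n)
    (B : ℂ)
    (hB : B = -(kappa n γ * kappa' n γ') - kappa' n γ * kappa n γ' +
      xi n γ * (starRingEnd ℂ) (xi n γ') + xi n γ' * (starRingEnd ℂ) (xi n γ)) :
    (∃ m : ℤ, B = 2 * n + (n : ℂ) ^ 2 * m) ∧
    (3 < n → 2 * (n : ℝ) ≤ ‖B‖) := by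
  set δ := γ⁻¹ * γ'
  have hδ : δ ∈ CohnSubgroup n := mul_mem (inv_mem hγ) hγ'
  have hBδ : B = cohnPairing n 1 δ := by
    rw [hB, ← cohnPairing_mul_left n γ, mul_one, mul_inv_cancel_left]
    rfl
  obtain ⟨ya, ha⟩ := exists_int_two_mul_im_eq_of_mem_cohnSubgroup hsf hδ 0 0
  obtain ⟨yb, hb⟩ := exists_int_two_mul_im_eq_of_mem_cohnSubgroup hsf hδ 0 1
  obtain ⟨yc, hc⟩ := exists_int_two_mul_im_eq_of_mem_cohnSubgroup hsf hδ 1 0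
  obtain ⟨yd, hd⟩ := exists_int_two_mul_im_eq_of_mem_cohnSubgroup hsf hδ 1 1
  set m := ya * yd - yb * yc
  have him : 4 * ((δ 0 0).im * (δ 1 1).im - (δ 0 1).im * (δ 1 0).im) = n * m := by
    have hsqrt := Real.sq_sqrt (Nat.cast_nonneg (α := ℝ) n)
    push_cast [m]
    linear_combination (2 * (δ 1 1).im) * ha + ya * √(n : ℝ) * hd - (2 * (δ 1 0).im) * hb
      - yb * √(n : ℝ) * hc + (ya * yd - yb * yc : ℝ) * hsqrt
  have hBm : B = ((2 * n + n ^ 2 * m : ℤ) : ℂ) := by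
    rw [hBδ, cohnPairing_one_left, him]
    push_cast
    ring
  refine ⟨⟨m, by rw [hBm]; push_cast; ring⟩, fun hn3 => ?_⟩
  rw [hBm, norm_intCast]
  exact_mod_cast two_mul_le_abs_two_mul_add_sq_mul (n := n) (by exact_mod_cast hn3) m

/-- For `γ, γ' ∈ 𝒲`, the pairing
`B = −κ(γ)κ'(γ') − κ'(γ)κ(γ') + ξ(γ)conj(ξ(γ')) + ξ(γ')conj(ξ(γ))`
is a rational integer congruent to `2n` modulo `n²`, and if `n > 3` then `|B| ≥ 2n`. -/
theorem cohnSubgroup_pairing (n : ℕ) (hsf : Squarefree n) (hn : 0 < n)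
    (γ γ' : Matrix.SpecialLinearGroup (Fin 2) ℂ)
    (hγ : γ ∈ CohnSubgroup n) (hγ' : γ' ∈ CohnSubgroup n)
    (B : ℂ)
    (hB : B = -(kappa n γ * kappa' n γ') - kappa' n γ * kappa n γ' +
      xi n γ * (starRingEnd ℂ) (xi n γ') + xi n γ' * (starRingEnd ℂ) (xi n γ)) :
    (∃ m : ℤ, B = 2 * n + (n : ℂ) ^ 2 * m) ∧
    (3 < n → 2 * (n : ℝ) ≤ ‖B‖) :=
  cohnSubgroup_pairing_general n hsf γ γ' hγ hγ' B hB
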